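/- Let n ≥ 1, A ∈ ℂ^{n×n}, and p = (p₀,p₁,p₂) ∈ ℝ³ with (p₁,p₂) ≠ (0,0). Let d = n − rank(p₀·I_n + p₁·Re A + p₂·Im A) be the corank of the Hermitian matrix p₀·I_n + p₁·Re A + p₂·Im A. Then: (1) for every q ∈ ℝ³, the binary form f_A(r·q + s·p) ∈ ℝ[r,s] is divisible by r^d; and (2) for q = (1,0,0), the binary form f_A(r·q + s·p) is not divisible by r^{d+1}. Hence d is the maximum integer such that r^d divides f_A(r·q + s·p) for every q ∈ ℝ³. -/

import Mathlib

open Matrix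

noncomputable section

/-- The Hermitian real part `(A + Aᴴ)/2` of a complex matrix. -/
def ReM {n : ℕ} (A : Matrix (Fin n) (Fin n) ℂ) : Matrix (Fin n) (Fin n) ℂ :=
  (2⁻¹ : ℂ) • (A + Aᴴ)

/-- The Hermitian imaginary part `(A - Aᴴ)/(2i)` of a complex matrix. -/
def ImM {n : ℕ} (A : Matrix (Fin n) (Fin n) ℂ) : Matrix (Fin n) (Fin n) ℂ :=
  ((2 * Complex.I)⁻¹ : ℂ) • (A - Aᴴ)

/-- The `k`-th largest eigenvalue (for `1 ≤ k ≤ n`) of a Hermitian `n × n` matrix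
(with junk value `0` for non-Hermitian input): the eigenvalues sorted in increasing
order, evaluated at index `n - k`. -/
def kthEig {n : ℕ} (M : Matrix (Fin n) (Fin n) ℂ) (k : ℕ) : ℝ :=
  if hM : M.IsHermitian then
    if h : n - k < n then (hM.eigenvalues ∘ Tuple.sort hM.eigenvalues) ⟨n - k, h⟩ else 0
  else 0

/-- `λ_k(x,y) = λ_k(x·Re A + y·Im A)`. -/
def lamXY {n : ℕ} (A : Matrix (Fin n) (Fin n) ℂ) (k : ℕ) (x y : ℝ) : ℝ :=
  kthEig ((x : ℂ) • ReM A + (y : ℂ) • ImM A) k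

/-- `λ_k(θ) = λ_k(cos θ · Re A + sin θ · Im A)`. -/
def lamTheta {n : ℕ} (A : Matrix (Fin n) (Fin n) ℂ) (k : ℕ) (θ : ℝ) : ℝ :=
  lamXY A k (Real.cos θ) (Real.sin θ)

/-- The rank-`k` numerical range, via the Li–Sze halfplane description:
`Λ_k(A) = {a + ib : a cos θ + b sin θ ≤ λ_k(θ) for all θ}`. -/
def NumRange {n : ℕ} (A : Matrix (Fin n) (Fin n) ℂ) (k : ℕ) : Set ℂ :=
  {z : ℂ | ∀ θ : ℝ, z.re * Real.cos θ + z.im * Real.sin θ ≤ lamTheta A k θ}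

/-- The matrix pencil `v₀·I + v₁·Re A + v₂·Im A`. -/
def pencil {n : ℕ} (A : Matrix (Fin n) (Fin n) ℂ) (v : Fin 3 → ℝ) :
    Matrix (Fin n) (Fin n) ℂ :=
  (v 0 : ℂ) • (1 : Matrix (Fin n) (Fin n) ℂ) + (v 1 : ℂ) • ReM A + (v 2 : ℂ) • ImM A

open MvPolynomial in
/-- The binary form `f(r·q + s·p) ∈ ℝ[r,s]` obtained by restricting `f ∈ ℝ[t,x,y]`
to the line spanned by `q` and `p` (variable `X 0 = r`, `X 1 = s`). -/
def substLine (f : MvPolynomial (Fin 3) ℝ) (q p : Fin 3 → ℝ) : MvPolynomial (Fin 2) ℝ :=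
  aeval (fun i => C (q i) * X 0 + C (p i) * X 1) f

/-!
Diagonalise the Hermitian matrix `M = p₀ I + p₁ Re A + p₂ Im A` by a unitary `U`. On the line
`r q + s p` the Kippenhahn polynomial is `det (r Q + s M) = det (r U⋆QU + s D)` with `Q` the pencil
at `q` and `D` the diagonal matrix of eigenvalues of `M`; each of the `d` rows where `D` vanishes is
divisible by `r`, so `r ^ d` divides the determinant. For `q = (1,0,0)` the form is
`∏ (r + λᵢ s) = r ^ d ∏_{λᵢ ≠ 0} (r + λᵢ s)`, and the second factor equals `∏_{λᵢ ≠ 0} λᵢ ≠ 0` at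
`(r, s) = (0, 1)`. Divisibility by a power of `r` is a condition on coefficients, so it can be
tested after extending scalars from `ℝ` to `ℂ`, where the determinant lives.
-/

open MvPolynomial Finset

namespace MvPolynomial

theorem X_pow_dvd_map_iff {σ R S : Type*} [CommRing R] [CommRing S] {φ : R →+* S}
    (hφ : Function.Injective φ) {i : σ} {e : ℕ} {F : MvPolynomial σ R} :
    X i ^ e ∣ map φ F ↔ X i ^ e ∣ F := by
  classical
  simp only [X_pow_eq_monomial, monomial_one_dvd_iff_modMonomial_eq_zero, MvPolynomial.ext_iff,
    coeff_zero]
  refine forall_congr' fun m => ?_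
  by_cases hm : Finsupp.single i e ≤ m
  · simp [coeff_modMonomial_of_le _ hm]
  · rw [coeff_modMonomial_of_not_le _ hm, coeff_modMonomial_of_not_le _ hm, coeff_map]
    exact map_eq_zero_iff φ hφ

theorem eval_map_ofReal {σ : Type*} (v : σ → ℝ) (g : MvPolynomial σ ℝ) :
    eval (fun i => (v i : ℂ)) (map (algebraMap ℝ ℂ) g) = eval v g := by
  rw [eval_map]
  exact (eval₂_comp_left (algebraMap ℝ ℂ) (RingHom.id ℝ) v g).symm

theorem eq_of_eval_ofReal_eq {σ : Type*} {F G : MvPolynomial σ ℂ}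
    (h : ∀ v : σ → ℝ, eval (fun i => (v i : ℂ)) F = eval (fun i => (v i : ℂ)) G) : F = G := by
  refine funext_set (fun _ => Set.range Complex.ofReal)
    (fun _ => Set.infinite_range_of_injective Complex.ofReal_injective) fun x hx => ?_
  choose v hv using fun i => hx i (Set.mem_univ i)
  obtain rfl : (fun i => (v i : ℂ)) = x := _root_.funext hv
  exact h v

end MvPolynomial

theorem Matrix.pow_card_dvd_det_of_dvd_rows {R ι : Type*} [CommRing R] [Fintype ι]
    [DecidableEq ι] (N : Matrix ι ι R) (x : R) (s : Finset ι) (h : ∀ i ∈ s, ∀ j, x ∣ N i j) :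
    x ^ #s ∣ N.det := by
  rw [det_apply]
  refine Finset.dvd_sum fun σ _ => ?_
  have hs : x ^ #s ∣ ∏ i ∈ s.image σ.symm, N (σ i) i := by
    rw [← card_image_of_injective s σ.symm.injective, ← prod_const]
    refine prod_dvd_prod_of_dvd _ _ fun i hi => ?_
    obtain ⟨k, hk, rfl⟩ := mem_image.mp hi
    simpa using h k hk _
  rw [Units.smul_def, zsmul_eq_mul]
  exact (hs.trans (prod_dvd_prod_of_subset _ _ _ (subset_univ _))).mul_left _

section BinaryDet

variable {R ι : Type*} [CommRing R] [Fintype ι] [DecidableEq ι]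

/-- The binary form `det (r • Q + s • M)`, with `r = X 0` and `s = X 1`. -/
def binaryDet (Q M : Matrix ι ι R) : MvPolynomial (Fin 2) R :=
  det ((X 0 : MvPolynomial (Fin 2) R) • (C : R →+* MvPolynomial (Fin 2) R).mapMatrix Q +
    (X 1 : MvPolynomial (Fin 2) R) • C.mapMatrix M)

theorem eval_binaryDet (Q M : Matrix ι ι R) (w : Fin 2 → R) :
    eval w (binaryDet Q M) = (w 0 • Q + w 1 • M).det := by
  rw [binaryDet, RingHom.map_det]
  congr 1
  ext i j
  simp

theorem binaryDet_conj {U V : Matrix ι ι R} (hVU : V * U = 1) (Q M : Matrix ι ι R) :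
    binaryDet (V * Q * U) (V * M * U) = binaryDet Q M := by
  set φ := (C : R →+* MvPolynomial (Fin 2) R).mapMatrix (m := ι)
  have hdet : (φ V).det * (φ U).det = 1 := by rw [← det_mul, ← map_mul, hVU, map_one, det_one]
  have hconj : ∀ r s : MvPolynomial (Fin 2) R,
      r • φ (V * Q * U) + s • φ (V * M * U) = φ V * (r • φ Q + s • φ M) * φ U := by
    intro r s
    simp only [map_mul, Matrix.mul_add, Matrix.add_mul, Matrix.mul_smul, Matrix.smul_mul]
  rw [binaryDet, binaryDet, hconj, det_mul, det_mul, mul_right_comm, hdet, one_mul]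

theorem X_pow_card_dvd_binaryDet_diagonal [DecidableEq R] (Q : Matrix ι ι R) (d : ι → R) :
    (X 0 : MvPolynomial (Fin 2) R) ^ #{i | d i = 0} ∣ binaryDet Q (diagonal d) := by
  refine Matrix.pow_card_dvd_det_of_dvd_rows _ _ _ fun i hi j => ?_
  have hdi : d i = 0 := (mem_filter.mp hi).2
  by_cases hij : i = j
  · subst hij
    simp [hdi]
  · simp [hij]

theorem binaryDet_one_diagonal (d : ι → R) :
    binaryDet 1 (diagonal d) = ∏ i, (X 0 + C (d i) * X 1 : MvPolynomial (Fin 2) R) := by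
  rw [binaryDet, ← det_diagonal]
  congr 1
  ext i j : 1
  by_cases hij : i = j
  · subst hij
    simp [mul_comm]
  · simp [hij]

theorem not_X_pow_succ_dvd_binaryDet_one_diagonal [IsDomain R] [DecidableEq R] (d : ι → R) :
    ¬ (X 0 : MvPolynomial (Fin 2) R) ^ (#{i | d i = 0} + 1) ∣ binaryDet 1 (diagonal d) := by
  set P : MvPolynomial (Fin 2) R := ∏ i ∈ {i | d i ≠ 0}, (X 0 + C (d i) * X 1)
  have hsplit : binaryDet 1 (diagonal d) = X 0 ^ #{i | d i = 0} * P := by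
    rw [binaryDet_one_diagonal, ← prod_filter_mul_prod_filter_not univ (fun i => d i = 0),
      ← prod_const]
    congr 1
    exact prod_congr rfl fun i hi => by simp [(mem_filter.mp hi).2]
  rw [hsplit, pow_succ, mul_dvd_mul_iff_left (pow_ne_zero _ (X_ne_zero 0))]
  rintro ⟨k, hk⟩
  have hP : eval ![0, 1] P = ∏ i ∈ {i | d i ≠ 0}, d i := by simp [P, map_prod]
  rw [hk, map_mul, eval_X] at hP
  exact prod_ne_zero_iff.mpr (fun i hi => (mem_filter.mp hi).2) (by simpa using hP.symm)

end BinaryDet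

theorem eval_substLine (f : MvPolynomial (Fin 3) ℝ) (q p : Fin 3 → ℝ) (w : Fin 2 → ℝ) :
    eval w (substLine f q p) = eval (w 0 • q + w 1 • p) f := by
  rw [substLine, aeval_eq_bind₁]
  refine (eval₂Hom_bind₁ (RingHom.id ℝ) w _ f).trans (congrArg (eval · f) (funext fun i => ?_))
  simp [mul_comm]

theorem ReM_isHermitian {n : ℕ} (A : Matrix (Fin n) (Fin n) ℂ) : (ReM A).IsHermitian :=
  (isHermitian_add_transpose_self A).smul (by simp [IsSelfAdjoint])

theorem ImM_eq_ReM {n : ℕ} (A : Matrix (Fin n) (Fin n) ℂ) : ImM A = ReM (-Complex.I • A) := by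
  ext i j
  simp only [ImM, ReM, _root_.mul_inv_rev, Complex.inv_I, neg_mul, Matrix.smul_apply,
    Matrix.sub_apply, conjTranspose_apply, RCLike.star_def, smul_eq_mul, neg_smul,
    conjTranspose_neg, conjTranspose_smul, Complex.conj_I, neg_neg, Matrix.add_apply,
    Matrix.neg_apply]
  field_simp
  ring

theorem pencil_isHermitian {n : ℕ} (A : Matrix (Fin n) (Fin n) ℂ) (v : Fin 3 → ℝ) :
    (pencil A v).IsHermitian := by
  have hreal : ∀ x : ℝ, IsSelfAdjoint (x : ℂ) := fun x => Complex.conj_ofReal x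
  rw [pencil, ImM_eq_ReM]
  exact ((isHermitian_one.smul (hreal _)).add ((ReM_isHermitian A).smul (hreal _))).add
    ((ReM_isHermitian _).smul (hreal _))

theorem pencil_smul_add_smul {n : ℕ} (A : Matrix (Fin n) (Fin n) ℂ) (q p : Fin 3 → ℝ)
    (a b : ℝ) : pencil A (a • q + b • p) = (a : ℂ) • pencil A q + (b : ℂ) • pencil A p := by
  simp only [pencil, Pi.add_apply, Pi.smul_apply, smul_eq_mul]
  push_cast
  module

theorem pencil_one_zero_zero {n : ℕ} (A : Matrix (Fin n) (Fin n) ℂ) : pencil A ![1, 0, 0] = 1 := by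
  simp [pencil]

namespace Matrix.IsHermitian

variable {𝕜 ι : Type*} [RCLike 𝕜] [Fintype ι] [DecidableEq ι] {M : Matrix ι ι 𝕜}

theorem card_sub_rank_eq_card_eigenvalues_eq_zero [DecidableEq 𝕜] (hM : M.IsHermitian) :
    Fintype.card ι - M.rank = #{i | (RCLike.ofReal ∘ hM.eigenvalues) i = (0 : 𝕜)} := by
  have hsplit := card_filter_add_card_filter_not (s := univ) (fun i => hM.eigenvalues i = 0)
  rw [hM.rank_eq_card_non_zero_eigs, Fintype.card_subtype, ← card_univ]
  simp only [Function.comp_apply, RCLike.ofReal_eq_zero, ne_eq] at hsplit ⊢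
  omega

theorem binaryDet_eq_binaryDet_diagonal (hM : M.IsHermitian) (Q : Matrix ι ι 𝕜) :
    binaryDet Q M = binaryDet (star (hM.eigenvectorUnitary : Matrix ι ι 𝕜) * Q *
      (hM.eigenvectorUnitary : Matrix ι ι 𝕜)) (diagonal (RCLike.ofReal ∘ hM.eigenvalues)) := by
  rw [← hM.conjStarAlgAut_star_eigenvectorUnitary, Unitary.conjStarAlgAut_star_apply,
    binaryDet_conj (Unitary.coe_star_mul_self _)]

theorem X_pow_corank_dvd_binaryDet (hM : M.IsHermitian) (Q : Matrix ι ι 𝕜) :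
    (X 0 : MvPolynomial (Fin 2) 𝕜) ^ (Fintype.card ι - M.rank) ∣ binaryDet Q M := by
  classical
  rw [hM.binaryDet_eq_binaryDet_diagonal, hM.card_sub_rank_eq_card_eigenvalues_eq_zero]
  exact X_pow_card_dvd_binaryDet_diagonal _ _

theorem not_X_pow_corank_succ_dvd_binaryDet_one (hM : M.IsHermitian) :
    ¬ (X 0 : MvPolynomial (Fin 2) 𝕜) ^ (Fintype.card ι - M.rank + 1) ∣ binaryDet 1 M := by
  classical
  rw [hM.binaryDet_eq_binaryDet_diagonal, Matrix.mul_one, Unitary.coe_star_mul_self,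
    hM.card_sub_rank_eq_card_eigenvalues_eq_zero]
  exact not_X_pow_succ_dvd_binaryDet_one_diagonal _

end Matrix.IsHermitian

theorem map_substLine_eq_binaryDet {n : ℕ} {A : Matrix (Fin n) (Fin n) ℂ}
    {fA : MvPolynomial (Fin 3) ℝ} (hfA : ∀ v : Fin 3 → ℝ, ((eval v fA : ℝ) : ℂ) = (pencil A v).det)
    (q p : Fin 3 → ℝ) :
    map (algebraMap ℝ ℂ) (substLine fA q p) = binaryDet (pencil A q) (pencil A p) := by
  refine eq_of_eval_ofReal_eq fun w => ?_
  rw [eval_map_ofReal, eval_substLine, hfA, pencil_smul_add_smul, eval_binaryDet]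

open MvPolynomial in
theorem stmt19_general {n : ℕ}
    (A : Matrix (Fin n) (Fin n) ℂ)
    (fA : MvPolynomial (Fin 3) ℝ)
    (hfA : ∀ v : Fin 3 → ℝ, ((eval v fA : ℝ) : ℂ) = (pencil A v).det)
    (p : Fin 3 → ℝ) :
    (∀ q : Fin 3 → ℝ,
      (X 0 : MvPolynomial (Fin 2) ℝ) ^ (n - (pencil A p).rank) ∣ substLine fA q p) ∧
    ¬ ((X 0 : MvPolynomial (Fin 2) ℝ) ^ (n - (pencil A p).rank + 1) ∣
        substLine fA ![1, 0, 0] p) ∧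
    (∀ e : ℕ,
      (∀ q : Fin 3 → ℝ, (X 0 : MvPolynomial (Fin 2) ℝ) ^ e ∣ substLine fA q p) →
      e ≤ n - (pencil A p).rank) := by
  have hM := pencil_isHermitian A p
  have hdvd : ∀ e q, (X 0 : MvPolynomial (Fin 2) ℝ) ^ e ∣ substLine fA q p ↔
      X 0 ^ e ∣ binaryDet (pencil A q) (pencil A p) := fun e q => by
    rw [← map_substLine_eq_binaryDet hfA, X_pow_dvd_map_iff (algebraMap ℝ ℂ).injective]
  have hsharp : ¬ (X 0 : MvPolynomial (Fin 2) ℝ) ^ (n - (pencil A p).rank + 1) ∣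
      substLine fA ![1, 0, 0] p := by
    simpa [hdvd, pencil_one_zero_zero] using hM.not_X_pow_corank_succ_dvd_binaryDet_one
  refine ⟨fun q => ?_, hsharp, fun e he => ?_⟩
  · simpa [hdvd] using hM.X_pow_corank_dvd_binaryDet (pencil A q)
  · by_contra! hlt
    exact hsharp ((pow_dvd_pow _ hlt).trans (he _))

open MvPolynomial in
/-- Let `d = n − rank(p₀ I + p₁ Re A + p₂ Im A)` be the corank of the
pencil at `p`. Then `r^d` divides `f_A(r·q + s·p)` for every `q`, `r^{d+1}` does not
divide it for `q = (1,0,0)`, and hence `d` is the maximal such exponent. -/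
theorem stmt19 {n : ℕ} (hn : 1 ≤ n)
    (A : Matrix (Fin n) (Fin n) ℂ)
    (fA : MvPolynomial (Fin 3) ℝ)
    (hfA : ∀ v : Fin 3 → ℝ, ((eval v fA : ℝ) : ℂ) = (pencil A v).det)
    (p : Fin 3 → ℝ) (hp : (p 1, p 2) ≠ (0, 0)) :
    (∀ q : Fin 3 → ℝ,
      (X 0 : MvPolynomial (Fin 2) ℝ) ^ (n - (pencil A p).rank) ∣ substLine fA q p) ∧
    ¬ ((X 0 : MvPolynomial (Fin 2) ℝ) ^ (n - (pencil A p).rank + 1) ∣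
        substLine fA ![1, 0, 0] p) ∧
    (∀ e : ℕ,
      (∀ q : Fin 3 → ℝ, (X 0 : MvPolynomial (Fin 2) ℝ) ^ e ∣ substLine fA q p) →
      e ≤ n - (pencil A p).rank) :=
  stmt19_general A fA hfA p
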